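/- Let n ≥ 3 and let (q_1,…,q_n) be a tuple of symmetric bilinear maps ℝ^n × ℝ^n → ℝ^n lying in Ker L^Ψ_I ∩ W, where I is the identity matrix. Then q_i(e_j,e_j) = 0 for all i,j = 1,…,n, and ⟨e_i, q_i(e_j,e_k)⟩ = ⟨e_j, q_i(e_j,e_k)⟩ = ⟨e_k, q_i(e_j,e_k)⟩ = 0 for all i,j,k = 1,…,n. -/

import Mathlib

open scoped RealInnerProductSpace

noncomputable section

/-- `ℝ^n` with the Euclidean inner product and norm. -/
abbrev E (n : ℕ) : Type := EuclideanSpace ℝ (Fin n)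

/-- The symmetric bilinear map `Q_v(ξ,η) = ⟨ξ,η⟩·v − ⟨ξ,v⟩·η − ⟨η,v⟩·ξ`. -/
def Qv {n : ℕ} (v ξ η : E n) : E n := ⟪ξ, η⟫ • v - ⟪ξ, v⟫ • η - ⟪η, v⟫ • ξ

/-- The bracket `[Q,Q']` of two (symmetric bilinear) maps. -/
def brk {n : ℕ} (Q Q' : E n → E n → E n) (ξ η θ : E n) : E n :=
  (Q ξ (Q' η θ) + Q η (Q' θ ξ) + Q θ (Q' ξ η))
    - (Q' ξ (Q η θ) + Q' η (Q θ ξ) + Q' θ (Q ξ η))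

/-- A map `ℝ^n × ℝ^n → ℝ^n` is a symmetric bilinear map. -/
def IsSymmBilin {n : ℕ} (q : E n → E n → E n) : Prop :=
  (∀ ξ η, q ξ η = q η ξ) ∧ ∀ ξ, IsLinearMap ℝ (q ξ)

/-- The standard basis vectors `e_1, …, e_n` of `ℝ^n`. -/
def stdE (n : ℕ) (i : Fin n) : E n := EuclideanSpace.single i 1

/-- The `i`-th component of `L^Φ_B (A', B')`, where `v = v_i` is the `i`-th column of `B`
and `ω = ω_i` the `i`-th column of `B'`. -/
def LPhiC {n : ℕ} (A' : E n →ₗ[ℝ] E n) (v ω : E n) (ξ η : E n) : E n :=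
  A' (Qv v ξ η) - Qv v (A' ξ) η - Qv v ξ (A' η) + Qv ω ξ η

/-- `(q_1,…,q_n)` lies in the kernel of `L^Ψ_B`, where `v i` are the columns of `B`. -/
def KerPsi {n : ℕ} (v : Fin n → E n) (q : Fin n → E n → E n → E n) : Prop :=
  ∀ i j : Fin n, i < j → ∀ ξ η θ : E n,
    brk (q i) (Qv (v j)) ξ η θ = brk (q j) (Qv (v i)) ξ η θ

/-- `(q_1,…,q_n)` lies in the subspace `W`; `i0` is the index of the first coordinate. -/
def memW {n : ℕ} (i0 : Fin n) (q : Fin n → E n → E n → E n) : Prop :=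
  (∀ j, q j (stdE n j) (stdE n j) = 0) ∧
  (∀ i j, ⟪stdE n i, q j (stdE n i) (stdE n i)⟫ + ⟪stdE n j, q i (stdE n j) (stdE n j)⟫ = 0) ∧
  (∀ j, ⟪stdE n i0, q i0 (stdE n j) (stdE n j)⟫ = 0)

/-!
Evaluating the kernel equations `[q_i, Q_{e_j}] = [q_j, Q_{e_i}]` on triples of vectors of an
orthonormal frame gives linear relations among the values `q_i(e_a, e_b)`. On `(e_i, e_i, e_i)`
they give `q_i(e_i, ·) = 0` on the frame; on `(e_j, e_j, e_i)`, together with the skew condition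
of `W`, they give `q_j(e_i, e_i) = -c_{ij} e_j` with `c_{ij} = ⟨e_i, q_i(e_j, e_j)⟩`. On
`(e_j, e_j, e_l)` with `i, j, l` distinct, `q_i(e_j, e_l)` turns out antisymmetric in `(i, j)`;
being symmetric in `(j, l)` it vanishes. Finally `(e_l, e_l, e_j)` yields the cocycle relation
`c_{ji} = c_{li} - c_{lj}`, and taking `l` to be the first index, where `W` makes `c_{l·}`
vanish, kills every coefficient.
-/

theorem KerPsi.brk_eq {n : ℕ} {v : Fin n → E n} {q : Fin n → E n → E n → E n}
    (hker : KerPsi v q) (i j : Fin n) (ξ η θ : E n) :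
    brk (q i) (Qv (v j)) ξ η θ = brk (q j) (Qv (v i)) ξ η θ := by
  rcases lt_trichotomy i j with h | rfl | h
  · exact hker i j h ξ η θ
  · rfl
  · exact (hker j i h ξ η θ).symm

theorem brk_Qv_eq {n : ℕ} {q : E n → E n → E n} (hq : IsSymmBilin q) (m a b c : E n) :
    brk q (Qv m) a b c =
      ⟪b, c⟫ • q a m + ⟪c, a⟫ • q b m + ⟪a, b⟫ • q c m
      - ⟪a, m⟫ • q b c - ⟪b, m⟫ • q c a - ⟪c, m⟫ • q a b
      - (⟪a, q b c⟫ + ⟪b, q c a⟫ + ⟪c, q a b⟫) • m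
      + ⟪m, q b c⟫ • a + ⟪m, q c a⟫ • b + ⟪m, q a b⟫ • c := by
  obtain ⟨hsymm, hlin⟩ := hq
  simp only [brk, Qv, (hlin _).map_sub, (hlin _).map_smul]
  rw [real_inner_comm (q b c) m, real_inner_comm (q c a) m, real_inner_comm (q a b) m,
    hsymm b a, hsymm c a, hsymm c b]
  module

section OrthonormalFrame

variable {n : ℕ} {e : Fin n → E n} {q : Fin n → E n → E n → E n}

theorem q_self_basis_eq_zero (he : Orthonormal ℝ e) (hq : ∀ i, IsSymmBilin (q i))
    (hker : KerPsi e q) (hdiag : ∀ j, q j (e j) (e j) = 0) (i j : Fin n) :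
    q i (e i) (e j) = 0 := by
  rcases eq_or_ne i j with rfl | hij
  · exact hdiag i
  have key := hker.brk_eq i j (e i) (e i) (e i)
  rw [brk_Qv_eq (hq i), brk_Qv_eq (hq j)] at key
  simp only [orthonormal_iff_ite.mp he, if_true, hij, if_false, hdiag i, smul_zero, zero_smul,
    inner_zero_right, one_smul, add_zero, sub_zero] at key
  have h3 : (3 : ℝ) • q i (e i) (e j) = 0 := by
    linear_combination (norm := module) key
  simpa using h3

theorem q_basis_self_eq_zero (he : Orthonormal ℝ e) (hq : ∀ i, IsSymmBilin (q i))
    (hker : KerPsi e q) (hdiag : ∀ j, q j (e j) (e j) = 0) (i j : Fin n) :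
    q i (e j) (e i) = 0 :=
  ((hq i).1 _ _).trans (q_self_basis_eq_zero he hq hker hdiag i j)

theorem q_basis_basis_eq_smul (he : Orthonormal ℝ e) (hq : ∀ i, IsSymmBilin (q i))
    (hker : KerPsi e q) (hdiag : ∀ j, q j (e j) (e j) = 0)
    (hskew : ∀ i j, ⟪e i, q j (e i) (e i)⟫ + ⟪e j, q i (e j) (e j)⟫ = 0) {i j : Fin n}
    (hij : i ≠ j) :
    q j (e i) (e i) = (-⟪e i, q i (e j) (e j)⟫) • e j := by
  have key := hker.brk_eq i j (e j) (e j) (e i)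
  rw [brk_Qv_eq (hq i), brk_Qv_eq (hq j)] at key
  simp only [orthonormal_iff_ite.mp he, if_true, hij, Ne.symm hij, if_false,
    q_self_basis_eq_zero he hq hker hdiag, q_basis_self_eq_zero he hq hker hdiag, smul_zero,
    zero_smul, inner_zero_right, one_smul, add_zero, zero_add, sub_zero, zero_sub] at key
  have hq_eq : q j (e i) (e i) =
      ⟪e j, q i (e j) (e j)⟫ • e i - ⟪e i, q i (e j) (e j)⟫ • e j := by
    linear_combination (norm := module) -key
  have hcomp : ⟪e j, q i (e j) (e j)⟫ = 0 := by
    have h := congrArg (⟪e i, ·⟫) hq_eq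
    simp only [inner_sub_right, real_inner_smul_right, orthonormal_iff_ite.mp he, if_true, hij,
      if_false, mul_one, mul_zero, sub_zero] at h
    linarith [hskew i j]
  rw [hq_eq, hcomp, zero_smul, zero_sub, neg_smul]

theorem q_basis_cross_eq_neg (he : Orthonormal ℝ e) (hq : ∀ i, IsSymmBilin (q i))
    (hker : KerPsi e q) (hdiag : ∀ j, q j (e j) (e j) = 0)
    (hskew : ∀ i j, ⟪e i, q j (e i) (e i)⟫ + ⟪e j, q i (e j) (e j)⟫ = 0) {i j l : Fin n}
    (hij : i ≠ j) (hli : l ≠ i) (hlj : l ≠ j) :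
    q i (e j) (e l) = -q j (e i) (e l) := by
  have key := hker.brk_eq i j (e j) (e j) (e l)
  rw [brk_Qv_eq (hq i), brk_Qv_eq (hq j)] at key
  simp only [orthonormal_iff_ite.mp he, if_true, Ne.symm hij, hli, hlj, Ne.symm hlj, if_false,
    q_self_basis_eq_zero he hq hker hdiag, q_basis_self_eq_zero he hq hker hdiag,
    q_basis_basis_eq_smul he hq hker hdiag hskew (Ne.symm hij), (hq i).1 (e l) (e j),
    (hq j).1 (e l) (e i), real_inner_smul_right, smul_zero, zero_smul,
    inner_zero_right, one_smul, mul_zero, add_zero, zero_add, sub_zero] at key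
  linear_combination (norm := module) -key

theorem q_basis_cross_eq_zero (he : Orthonormal ℝ e) (hq : ∀ i, IsSymmBilin (q i))
    (hker : KerPsi e q) (hdiag : ∀ j, q j (e j) (e j) = 0)
    (hskew : ∀ i j, ⟪e i, q j (e i) (e i)⟫ + ⟪e j, q i (e j) (e j)⟫ = 0) {i j l : Fin n}
    (hij : i ≠ j) (hli : l ≠ i) (hlj : l ≠ j) :
    q i (e j) (e l) = 0 := by
  have hneg := @q_basis_cross_eq_neg _ _ _ he hq hker hdiag hskew
  have hself_neg : q i (e j) (e l) = -q i (e j) (e l) :=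
    calc q i (e j) (e l) = -q j (e i) (e l) := hneg hij hli hlj
      _ = -q j (e l) (e i) := by rw [(hq j).1]
      _ = q l (e j) (e i) := by rw [hneg (Ne.symm hlj) hij (Ne.symm hli), neg_neg]
      _ = q l (e i) (e j) := by rw [(hq l).1]
      _ = -q i (e l) (e j) := hneg hli (Ne.symm hlj) (Ne.symm hij)
      _ = -q i (e j) (e l) := by rw [(hq i).1]
  have h2 : (2 : ℝ) • q i (e j) (e l) = 0 := by
    linear_combination (norm := module) hself_neg
  simpa using h2

theorem inner_q_basis_basis_eq_sub (he : Orthonormal ℝ e) (hq : ∀ i, IsSymmBilin (q i))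
    (hker : KerPsi e q) (hdiag : ∀ j, q j (e j) (e j) = 0)
    (hskew : ∀ i j, ⟪e i, q j (e i) (e i)⟫ + ⟪e j, q i (e j) (e j)⟫ = 0) {i j l : Fin n}
    (hij : i ≠ j) (hli : l ≠ i) (hlj : l ≠ j) :
    ⟪e j, q j (e i) (e i)⟫ = ⟪e l, q l (e i) (e i)⟫ - ⟪e l, q l (e j) (e j)⟫ := by
  have hcross := @q_basis_cross_eq_zero _ _ _ he hq hker hdiag hskew
  have hsq := @q_basis_basis_eq_smul _ _ _ he hq hker hdiag hskew
  have key := hker.brk_eq i j (e l) (e l) (e j)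
  rw [brk_Qv_eq (hq i), brk_Qv_eq (hq j)] at key
  simp only [orthonormal_iff_ite.mp he, if_true, hij, Ne.symm hij, hli, hlj, Ne.symm hlj, if_false,
    q_self_basis_eq_zero he hq hker hdiag, q_basis_self_eq_zero he hq hker hdiag,
    hcross (Ne.symm hli) (Ne.symm hij) (Ne.symm hlj), hcross hij hli hlj,
    hcross (Ne.symm hlj) hij (Ne.symm hli), hsq (Ne.symm hij), hsq hli, hsq hlj,
    real_inner_smul_right, smul_zero, zero_smul, inner_zero_right, one_smul, mul_zero, mul_one,
    add_zero, zero_add, sub_zero, zero_sub] at key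
  have h :
      (⟪e j, q j (e i) (e i)⟫ - ⟪e l, q l (e i) (e i)⟫ + ⟪e l, q l (e j) (e j)⟫) • e i = 0 := by
    linear_combination (norm := module) -key
  rw [smul_eq_zero_iff_left (he.ne_zero i)] at h
  linarith

theorem inner_q_basis_basis_eq_zero (he : Orthonormal ℝ e) (hq : ∀ i, IsSymmBilin (q i))
    (hker : KerPsi e q) (hdiag : ∀ j, q j (e j) (e j) = 0)
    (hskew : ∀ i j, ⟪e i, q j (e i) (e i)⟫ + ⟪e j, q i (e j) (e j)⟫ = 0) {i₀ : Fin n}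
    (hi₀ : ∀ j, ⟪e i₀, q i₀ (e j) (e j)⟫ = 0) (i j : Fin n) :
    ⟪e j, q j (e i) (e i)⟫ = 0 := by
  rcases eq_or_ne i j with rfl | hij
  · simp [hdiag]
  rcases eq_or_ne j i₀ with rfl | hj
  · exact hi₀ i
  rcases eq_or_ne i i₀ with rfl | hi
  · rw [q_basis_basis_eq_smul he hq hker hdiag hskew hij, hi₀, neg_zero, zero_smul,
      inner_zero_right]
  rw [inner_q_basis_basis_eq_sub he hq hker hdiag hskew hij (Ne.symm hi) (Ne.symm hj), hi₀, hi₀,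
    sub_zero]

theorem q_basis_basis_eq_zero (he : Orthonormal ℝ e) (hq : ∀ i, IsSymmBilin (q i))
    (hker : KerPsi e q) (hdiag : ∀ j, q j (e j) (e j) = 0)
    (hskew : ∀ i j, ⟪e i, q j (e i) (e i)⟫ + ⟪e j, q i (e j) (e j)⟫ = 0) {i₀ : Fin n}
    (hi₀ : ∀ j, ⟪e i₀, q i₀ (e j) (e j)⟫ = 0) (i a b : Fin n) :
    q i (e a) (e b) = 0 := by
  rcases eq_or_ne a b with rfl | hab
  · rcases eq_or_ne a i with rfl | hai
    · exact hdiag a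
    rw [q_basis_basis_eq_smul he hq hker hdiag hskew hai,
      inner_q_basis_basis_eq_zero he hq hker hdiag hskew hi₀ i a, neg_zero, zero_smul]
  rcases eq_or_ne i a with rfl | hia
  · exact q_self_basis_eq_zero he hq hker hdiag i b
  rcases eq_or_ne i b with rfl | hib
  · exact q_basis_self_eq_zero he hq hker hdiag i a
  exact q_basis_cross_eq_zero he hq hker hdiag hskew hia (Ne.symm hib) (Ne.symm hab)

end OrthonormalFrame

/-- Lemma `lemma:inj 4`: for `n ≥ 3` and `(q_1,…,q_n) ∈ Ker L^Ψ_I ∩ W`,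
`q_i(e_j,e_j) = 0` for all `i, j`, and
`⟨e_i, q_i(e_j,e_k)⟩ = ⟨e_j, q_i(e_j,e_k)⟩ = ⟨e_k, q_i(e_j,e_k)⟩ = 0` for all `i, j, k`. -/
theorem stmt9 {n : ℕ} (hn : 3 ≤ n)
    (q : Fin n → E n → E n → E n) (hq : ∀ i, IsSymmBilin (q i))
    (hker : KerPsi (stdE n) q) (hW : memW ⟨0, by omega⟩ q) :
    (∀ i j : Fin n, q i (stdE n j) (stdE n j) = 0) ∧
    (∀ i j k : Fin n,
      ⟪stdE n i, q i (stdE n j) (stdE n k)⟫ = 0 ∧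
      ⟪stdE n j, q i (stdE n j) (stdE n k)⟫ = 0 ∧
      ⟪stdE n k, q i (stdE n j) (stdE n k)⟫ = 0) := by
  obtain ⟨hdiag, hskew, hi₀⟩ := hW
  have hstd : Orthonormal ℝ (stdE n) := EuclideanSpace.orthonormal_single
  have hzero := q_basis_basis_eq_zero hstd hq hker hdiag hskew hi₀
  exact ⟨fun i j => hzero i j j, fun i j k => by simp only [hzero, inner_zero_right, and_self]⟩

end
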